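/- arXiv:2502.07603 — 2 statements merged into one kernel-verified Lean document; each statement's English description precedes it below -/
import Mathlib

section
/- Consider x : [0, t_f] → ℝⁿ differentiable with ẋ(t) = f(x(t)) + g(x(t)) u(t) and x(0) = x₀, where f : ℝⁿ → ℝⁿ is D_f-Lipschitz with respect to the ∞-norm, g : ℝⁿ → ℝ^{n×m} is D_g-Lipschitz from the ∞-norm on ℝⁿ to the induced ∞-norm on matrices, u : [0, t_f] → ℝ^m is measurable with ‖u(t)‖_∞ ≤ 1 for all t, and D := D_f + D_g > 0. Set c := ‖f(x₀)‖_∞ + ‖g(x₀)‖_∞. Then ∫₀^{t_f} ‖x(t) − x₀‖_∞ dt ≤ c(e^{t_f D} − 1 − t_f D)/D². -/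
open Matrix MeasureTheory

/-- `∞`-norm of a vector: maximum absolute entry. -/
noncomputable def normInf {k : ℕ} (x : Fin k → ℝ) : ℝ := ⨆ i, |x i|

/-- Induced `∞`-norm of a matrix: maximum absolute row sum. -/
noncomputable def matNormInf {a b : ℕ} (A : Matrix (Fin a) (Fin b) ℝ) : ℝ :=
  ⨆ i, ∑ j, |A i j|

lemma normInf_eq_norm {k : ℕ} (x : Fin k → ℝ) : normInf x = ‖x‖ := by
  rcases Nat.eq_zero_or_pos k with hk | hk
  · subst hk
    rw [show x = 0 from Subsingleton.elim _ _, norm_zero]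
    simp [normInf]
  · haveI : Nonempty (Fin k) := ⟨⟨0, hk⟩⟩
    apply le_antisymm
    · refine ciSup_le fun i => ?_
      simpa [Real.norm_eq_abs] using norm_le_pi_norm x i
    · have h0 : (0:ℝ) ≤ normInf x := by
        unfold normInf
        exact le_trans (abs_nonneg _)
          (le_ciSup (f := fun i : Fin k => |x i|) (Set.Finite.bddAbove (Set.finite_range _))
            (Classical.arbitrary (Fin k)))
      rw [pi_norm_le_iff_of_nonneg h0]
      intro i
      rw [Real.norm_eq_abs]
      exact le_ciSup (f := fun i : Fin k => |x i|) (Set.Finite.bddAbove (Set.finite_range _)) i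

lemma normInf_nonneg {k : ℕ} (x : Fin k → ℝ) : 0 ≤ normInf x := by
  rw [normInf_eq_norm]; exact norm_nonneg _

lemma row_sum_le_matNormInf {a b : ℕ} (A : Matrix (Fin a) (Fin b) ℝ) (i : Fin a) :
    ∑ j, |A i j| ≤ matNormInf A :=
  le_ciSup (Set.Finite.bddAbove (Set.finite_range fun i => ∑ j, |A i j|)) i

lemma matNormInf_nonneg {a b : ℕ} (A : Matrix (Fin a) (Fin b) ℝ) : 0 ≤ matNormInf A := by
  rcases Nat.eq_zero_or_pos a with ha | ha
  · subst ha; simp [matNormInf]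
  · exact le_trans (Finset.sum_nonneg fun j _ => abs_nonneg _)
      (row_sum_le_matNormInf A ⟨0, ha⟩)

lemma matNormInf_sub_le {a b : ℕ} (A B : Matrix (Fin a) (Fin b) ℝ) :
    matNormInf A ≤ matNormInf B + matNormInf (A - B) := by
  rcases Nat.eq_zero_or_pos a with ha | ha
  · subst ha
    simpa [matNormInf] using add_nonneg (matNormInf_nonneg B) (matNormInf_nonneg (A - B))
  · haveI : Nonempty (Fin a) := ⟨⟨0, ha⟩⟩
    refine ciSup_le fun i => ?_
    calc ∑ j, |A i j| ≤ ∑ j, (|B i j| + |(A - B) i j|) := by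
          refine Finset.sum_le_sum fun j _ => ?_
          have : A i j = B i j + (A - B) i j := by simp
          rw [this]; exact abs_add_le _ _
      _ = (∑ j, |B i j|) + ∑ j, |(A - B) i j| := Finset.sum_add_distrib
      _ ≤ matNormInf B + matNormInf (A - B) :=
          add_le_add (row_sum_le_matNormInf B i) (row_sum_le_matNormInf (A - B) i)

lemma normInf_mulVec_le {a b : ℕ} (A : Matrix (Fin a) (Fin b) ℝ) (v : Fin b → ℝ) :
    normInf (A *ᵥ v) ≤ matNormInf A * normInf v := by
  rw [normInf_eq_norm]
  rw [pi_norm_le_iff_of_nonneg (mul_nonneg (matNormInf_nonneg A) (normInf_nonneg v))]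
  intro i
  rw [Real.norm_eq_abs]
  calc |(A *ᵥ v) i| = |∑ j, A i j * v j| := by rfl
    _ ≤ ∑ j, |A i j * v j| := Finset.abs_sum_le_sum_abs _ _
    _ = ∑ j, |A i j| * |v j| := by simp [abs_mul]
    _ ≤ ∑ j, |A i j| * normInf v := by
        refine Finset.sum_le_sum fun j _ => ?_
        refine mul_le_mul_of_nonneg_left ?_ (abs_nonneg _)
        rw [normInf_eq_norm]
        simpa [Real.norm_eq_abs] using norm_le_pi_norm v j
    _ = (∑ j, |A i j|) * normInf v := by rw [Finset.sum_mul]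
    _ ≤ matNormInf A * normInf v :=
        mul_le_mul_of_nonneg_right (row_sum_le_matNormInf A i) (normInf_nonneg v)

/-- For the nonlinear system `ẋ = f(x) + g(x) u` with Lipschitz `f`, `g` and bounded
measurable input `u`, the integrated state deviation satisfies
`∫₀^{t_f} ‖x(t) − x₀‖_∞ dt ≤ c(e^{t_f D} − 1 − t_f D)/D²`. -/
theorem integrated_state_deviation_bound {n m : ℕ} (tf : ℝ) (htf : 0 ≤ tf)
    (f : (Fin n → ℝ) → Fin n → ℝ) (g : (Fin n → ℝ) → Matrix (Fin n) (Fin m) ℝ)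
    (Df Dg : ℝ)
    (hf : ∀ x1 x2 : Fin n → ℝ, normInf (f x1 - f x2) ≤ Df * normInf (x1 - x2))
    (hg : ∀ x1 x2 : Fin n → ℝ, matNormInf (g x1 - g x2) ≤ Dg * normInf (x1 - x2))
    (hD : 0 < Df + Dg)
    (u : ℝ → Fin m → ℝ) (hu : Measurable u) (hub : ∀ t, normInf (u t) ≤ 1)
    (x : ℝ → Fin n → ℝ) (x0 : Fin n → ℝ) (hx0 : x 0 = x0)
    (hx : ∀ t ∈ Set.Icc (0 : ℝ) tf, HasDerivAt x (f (x t) + g (x t) *ᵥ u t) t) :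
    (∫ t in (0:ℝ)..tf, normInf (x t - x0)) ≤
      (normInf (f x0) + matNormInf (g x0)) *
        (Real.exp (tf * (Df + Dg)) - 1 - tf * (Df + Dg)) / (Df + Dg) ^ 2 := by
  set D := Df + Dg with hDdef
  set c := normInf (f x0) + matNormInf (g x0) with hcdef
  have hc : 0 ≤ c := add_nonneg (normInf_nonneg _) (matNormInf_nonneg _)
  set y : ℝ → Fin n → ℝ := fun t => x t - x0 with hydef
  have hy' : ∀ t ∈ Set.Icc (0:ℝ) tf,
      HasDerivWithinAt y (f (x t) + g (x t) *ᵥ u t) (Set.Ici t) t :=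
    fun t ht => ((hx t ht).sub_const x0).hasDerivWithinAt
  have hycont : ContinuousOn y (Set.Icc 0 tf) :=
    fun t ht => ((hx t ht).continuousAt.sub continuousAt_const).continuousWithinAt
  -- the derivative bound
  have bound : ∀ t ∈ Set.Ico (0:ℝ) tf,
      ‖f (x t) + g (x t) *ᵥ u t‖ ≤ D * ‖y t‖ + c := by
    intro t ht
    have h1 : ‖f (x t)‖ ≤ Df * ‖y t‖ + normInf (f x0) := by
      have := hf (x t) x0
      rw [normInf_eq_norm, normInf_eq_norm] at this
      calc ‖f (x t)‖ ≤ ‖f (x t) - f x0‖ + ‖f x0‖ := by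
            simpa using norm_add_le (f (x t) - f x0) (f x0)
        _ ≤ Df * ‖y t‖ + ‖f x0‖ := add_le_add this le_rfl
        _ = Df * ‖y t‖ + normInf (f x0) := by rw [normInf_eq_norm]
    have h2 : ‖g (x t) *ᵥ u t‖ ≤ Dg * ‖y t‖ + matNormInf (g x0) := by
      have hm : matNormInf (g (x t)) ≤ matNormInf (g x0) + Dg * ‖y t‖ := by
        have := hg (x t) x0
        rw [normInf_eq_norm] at this
        exact le_trans (matNormInf_sub_le (g (x t)) (g x0)) (add_le_add le_rfl this)
      calc ‖g (x t) *ᵥ u t‖ = normInf (g (x t) *ᵥ u t) := (normInf_eq_norm _).symm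
        _ ≤ matNormInf (g (x t)) * normInf (u t) := normInf_mulVec_le _ _
        _ ≤ matNormInf (g (x t)) * 1 := by
            refine mul_le_mul_of_nonneg_left (hub t) (matNormInf_nonneg _)
        _ = matNormInf (g (x t)) := mul_one _
        _ ≤ matNormInf (g x0) + Dg * ‖y t‖ := hm
        _ = Dg * ‖y t‖ + matNormInf (g x0) := add_comm _ _
    calc ‖f (x t) + g (x t) *ᵥ u t‖ ≤ ‖f (x t)‖ + ‖g (x t) *ᵥ u t‖ := norm_add_le _ _
      _ ≤ (Df * ‖y t‖ + normInf (f x0)) + (Dg * ‖y t‖ + matNormInf (g x0)) := add_le_add h1 h2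
      _ = D * ‖y t‖ + c := by rw [hDdef, hcdef]; ring
  have hy0 : ‖y 0‖ ≤ 0 := by simp [hydef, hx0]
  have gron := norm_le_gronwallBound_of_norm_deriv_right_le hycont
    (fun t ht => hy' t (Set.Ico_subset_Icc_self ht)) hy0 bound
  have hDne : D ≠ 0 := ne_of_gt hD
  have gron' : ∀ t ∈ Set.Icc (0:ℝ) tf, ‖y t‖ ≤ c / D * (Real.exp (D * t) - 1) := by
    intro t ht
    have := gron t ht
    rw [gronwallBound_of_K_ne_0 hDne] at this
    simpa using this
  -- integrate the pointwise bound
  have hInt1 : IntervalIntegrable (fun t => normInf (x t - x0)) volume 0 tf := by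
    have : ContinuousOn (fun t => ‖y t‖) (Set.Icc 0 tf) := hycont.norm
    refine ContinuousOn.intervalIntegrable ?_
    rw [Set.uIcc_of_le htf]
    intro t ht
    have := this t ht
    simpa [hydef, normInf_eq_norm] using this
  have hInt2 : IntervalIntegrable (fun t => c / D * (Real.exp (D * t) - 1)) volume 0 tf :=
    (Continuous.intervalIntegrable (by continuity) _ _)
  have hmono : (∫ t in (0:ℝ)..tf, normInf (x t - x0)) ≤
      ∫ t in (0:ℝ)..tf, c / D * (Real.exp (D * t) - 1) := by
    refine intervalIntegral.integral_mono_on htf hInt1 hInt2 ?_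
    intro t ht
    rw [normInf_eq_norm]
    exact gron' t ht
  -- compute the right-hand integral via an antiderivative
  have hF : ∀ t : ℝ, HasDerivAt (fun s => c / D * (Real.exp (D * s) / D - s))
      (c / D * (Real.exp (D * t) - 1)) t := by
    intro t
    have h1 : HasDerivAt (fun s : ℝ => Real.exp (D * s)) (Real.exp (D * t) * D) t := by
      simpa using ((hasDerivAt_id t).const_mul D).exp
    have h2 := ((h1.div_const D).sub (hasDerivAt_id t)).const_mul (c / D)
    refine h2.congr_deriv ?_
    simp [hDne]
  have hcalc : (∫ t in (0:ℝ)..tf, c / D * (Real.exp (D * t) - 1)) =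
      c * (Real.exp (tf * D) - 1 - tf * D) / D ^ 2 := by
    rw [intervalIntegral.integral_eq_sub_of_hasDerivAt (fun t _ => hF t) hInt2]
    have : Real.exp (D * tf) = Real.exp (tf * D) := by rw [mul_comm]
    rw [this]
    field_simp
    simp only [mul_zero, Real.exp_zero]; ring
  rw [hcalc] at hmono
  exact hmono
end

section
/- Consider x : [0, t_f] → ℝⁿ differentiable with ẋ(t) = f(x(t)) + g_c(x(t)) u_c(t) + g_uc(x(t)) u_uc(t) and x(0) = x₀, where f : ℝⁿ → ℝⁿ, g_c : ℝⁿ → ℝ^{n×m} and g_uc : ℝⁿ → ℝ^{n×p} are Lipschitz continuous, and u_c : [0, t_f] → ℝ^m, u_uc : [0, t_f] → ℝᵖ are measurable with ‖u_c(t)‖_∞ ≤ 1 and ‖u_uc(t)‖_∞ ≤ 1 for all t. Set B_c := g_c(x₀), B_uc := g_uc(x₀), assume B_c B_cᵀ is invertible with B_c† = B_cᵀ(B_c B_cᵀ)⁻¹, let x̃ := x₀ − x_tg, ū_uc := (1/t_f)∫₀^{t_f} u_uc(t) dt, and v := −∫₀^{t_f} f(x(t)) dt − ∫₀^{t_f}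 [(g_c(x(t)) − g_c(x₀)) u_c(t) + (g_uc(x(t)) − g_uc(x₀)) u_uc(t)] dt. If x(t_f) = x_tg, then ∫₀^{t_f} ‖u_c(t)‖₂² dt ≥ (1/t_f)‖B_c†(v − x̃ − t_f B_uc ū_uc)‖₂². -/
open Matrix MeasureTheory

/-- Moore–Penrose pseudoinverse of a full-row-rank matrix: `A† = Aᵀ (A Aᵀ)⁻¹`. -/
noncomputable def pinv {n m : ℕ} (A : Matrix (Fin n) (Fin m) ℝ) : Matrix (Fin m) (Fin n) ℝ :=
  Aᵀ * (A * Aᵀ)⁻¹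

lemma abs_le_normInf {k : ℕ} (x : Fin k → ℝ) (i : Fin k) : |x i| ≤ normInf x := by
  have : |x i| ≤ ⨆ j, |x j| := le_ciSup (Set.Finite.bddAbove (Set.finite_range fun j => |x j|)) i
  simpa [normInf] using this

lemma normInf_le_norm {k : ℕ} (x : Fin k → ℝ) : normInf x ≤ ‖x‖ := by
  rcases isEmpty_or_nonempty (Fin k) with h | h
  · simp [normInf, Real.iSup_of_isEmpty, norm_nonneg]
  · exact ciSup_le fun i => by simpa using norm_le_pi_norm x i

lemma abs_le_matNormInf {a b : ℕ} (A : Matrix (Fin a) (Fin b) ℝ) (i : Fin a) (j : Fin b) :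
    |A i j| ≤ matNormInf A := by
  refine le_trans ?_ (le_ciSup (Set.Finite.bddAbove (Set.finite_range _)) i)
  exact Finset.single_le_sum (f := fun j => |A i j|) (fun _ _ => abs_nonneg _) (Finset.mem_univ j)

/-- Scalar Cauchy–Schwarz for interval integrals. -/
lemma sq_integral_le (tf : ℝ) (htf : 0 < tf) (u : ℝ → ℝ)
    (hu : IntervalIntegrable u volume 0 tf)
    (hu2 : IntervalIntegrable (fun t => u t ^ 2) volume 0 tf) :
    (∫ t in (0:ℝ)..tf, u t) ^ 2 ≤ tf * ∫ t in (0:ℝ)..tf, u t ^ 2 := by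
  set c : ℝ := (∫ t in (0:ℝ)..tf, u t) / tf with hc
  have h0 : 0 ≤ ∫ t in (0:ℝ)..tf, (u t - c) ^ 2 :=
    intervalIntegral.integral_nonneg htf.le (fun t _ => sq_nonneg _)
  have hexp : ∀ t, (u t - c) ^ 2 = u t ^ 2 - (2 * c) * u t + c ^ 2 := fun t => by ring
  rw [intervalIntegral.integral_congr (fun t _ => hexp t)] at h0
  rw [intervalIntegral.integral_add ((hu2.sub (hu.const_mul (2 * c)))) intervalIntegrable_const,
    intervalIntegral.integral_sub hu2 (hu.const_mul (2 * c)),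
    intervalIntegral.integral_const_mul, intervalIntegral.integral_const] at h0
  have hI : ∫ t in (0:ℝ)..tf, u t = c * tf := by rw [hc, div_mul_cancel₀ _ htf.ne']
  rw [hI] at h0 ⊢
  simp only [smul_eq_mul, sub_zero] at h0
  nlinarith [sq_nonneg c, htf, mul_pos htf htf]

/-- Orthogonal projection inequality. -/
lemma proj_sq_le {n m : ℕ} (B : Matrix (Fin n) (Fin m) ℝ) (hB : IsUnit (B * Bᵀ).det)
    (U : Fin m → ℝ) : ∑ i, (((pinv B * B) *ᵥ U) i) ^ 2 ≤ ∑ i, (U i) ^ 2 := by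
  set P : Matrix (Fin m) (Fin m) ℝ := pinv B * B with hP
  have hsymm : Pᵀ = P := by
    simp only [hP, pinv, Matrix.transpose_mul, Matrix.transpose_transpose,
      Matrix.transpose_nonsing_inv]
    rw [Matrix.mul_assoc]
  have hidem : P * P = P := by
    have h1 : (B * Bᵀ) * (B * Bᵀ)⁻¹ = 1 := Matrix.mul_nonsing_inv _ hB
    simp only [hP, pinv, Matrix.mul_assoc]
    rw [← Matrix.mul_assoc B Bᵀ, ← Matrix.mul_assoc (B * Bᵀ), h1, Matrix.one_mul]
  set a : ℝ := ∑ i, ((P *ᵥ U) i) ^ 2 with ha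
  set b : ℝ := ∑ i, (U i) ^ 2 with hb
  have hkey : a = ∑ i, (P *ᵥ U) i * U i := by
    have h1 : (P *ᵥ U) ⬝ᵥ (P *ᵥ U) = ((P *ᵥ U) ᵥ* P) ⬝ᵥ U := Matrix.dotProduct_mulVec _ _ _
    have h2 : (P *ᵥ U) ᵥ* P = P *ᵥ U := by
      rw [← Matrix.mulVec_transpose, hsymm, Matrix.mulVec_mulVec, hidem]
    rw [h2] at h1
    simpa [ha, dotProduct, sq] using h1
  have hCS : (∑ i, (P *ᵥ U) i * U i) ^ 2 ≤ a * b :=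
    Finset.sum_mul_sq_le_sq_mul_sq Finset.univ _ _
  have ha0 : 0 ≤ a := Finset.sum_nonneg fun i _ => sq_nonneg _
  have hb0 : 0 ≤ b := Finset.sum_nonneg fun i _ => sq_nonneg _
  nlinarith [hCS, hkey, ha0, hb0]

lemma sc_intervalIntegrable (tf C : ℝ) (htf : 0 ≤ tf) (u : ℝ → ℝ)
    (hu : AEMeasurable u (volume.restrict (Set.Ioc 0 tf))) (hb : ∀ t, |u t| ≤ C) :
    IntervalIntegrable u volume 0 tf := by
  rw [intervalIntegrable_iff_integrableOn_Ioc_of_le htf]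
  exact Integrable.mono' (integrable_const C) hu.aestronglyMeasurable
    (Filter.Eventually.of_forall fun t => by rw [Real.norm_eq_abs]; exact hb t)

lemma aemeasurable_pi' {α : Type*} {m : MeasurableSpace α} {μ : MeasureTheory.Measure α}
    {k : ℕ} {f : α → Fin k → ℝ} (h : ∀ i, AEMeasurable (fun x => f x i) μ) :
    AEMeasurable f μ := by
  choose g hg hfg using h
  refine ⟨fun x i => g i x, measurable_pi_iff.2 hg, ?_⟩
  filter_upwards [MeasureTheory.ae_all_iff.2 hfg] with x hx
  funext i; exact hx i

lemma vec_intervalIntegrable {k : ℕ} (tf : ℝ) (htf : 0 ≤ tf) (u : ℝ → Fin k → ℝ)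
    (hu : ∀ i, AEMeasurable (fun t => u t i) (volume.restrict (Set.Ioc 0 tf)))
    (C : ℝ) (hb : ∀ t ∈ Set.Ioc (0:ℝ) tf, ∀ i, |u t i| ≤ C) :
    IntervalIntegrable u volume 0 tf := by
  rw [intervalIntegrable_iff_integrableOn_Ioc_of_le htf]
  have hC : (0:ℝ) ≤ max C 0 := le_max_right _ _
  refine Integrable.mono' (integrable_const (max C 0))
    ((aemeasurable_pi' hu).aestronglyMeasurable) ?_
  refine (ae_restrict_iff' measurableSet_Ioc).2 (Filter.Eventually.of_forall fun t ht => ?_)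
  rw [pi_norm_le_iff_of_nonneg hC]
  intro i
  rw [Real.norm_eq_abs]
  exact le_trans (hb t ht i) (le_max_left _ _)

lemma matvec_intervalIntegrable {n k : ℕ} (tf : ℝ) (htf : 0 ≤ tf)
    (A : ℝ → Matrix (Fin n) (Fin k) ℝ)
    (hA : ∀ i j, AEMeasurable (fun t => A t i j) (volume.restrict (Set.Ioc 0 tf)))
    (C : ℝ) (hb : ∀ t ∈ Set.Icc (0:ℝ) tf, ∀ i j, |A t i j| ≤ C)
    (u : ℝ → Fin k → ℝ) (hu : Measurable u) (hub : ∀ t i, |u t i| ≤ 1) :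
    IntervalIntegrable (fun t => A t *ᵥ u t) volume 0 tf := by
  refine vec_intervalIntegrable tf htf _ (fun i => ?_) (k * max C 0) (fun t ht i => ?_)
  · have : (fun t => (A t *ᵥ u t) i) = fun t => ∑ j, A t i j * u t j := by
      funext t; simp [Matrix.mulVec, dotProduct]
    rw [this]
    exact Finset.aemeasurable_fun_sum _ fun j _ =>
      (hA i j).mul (((measurable_pi_apply j).comp hu).aemeasurable)
  · have hti : t ∈ Set.Icc (0:ℝ) tf := Set.Ioc_subset_Icc_self ht
    have : (A t *ᵥ u t) i = ∑ j, A t i j * u t j := by simp [Matrix.mulVec, dotProduct]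
    rw [this]
    calc |∑ j, A t i j * u t j| ≤ ∑ j, |A t i j * u t j| := Finset.abs_sum_le_sum_abs _ _
      _ ≤ ∑ _j : Fin k, max C 0 := by
          refine Finset.sum_le_sum fun j _ => ?_
          rw [abs_mul]
          have h1 : |A t i j| ≤ max C 0 := le_trans (hb t hti i j) (le_max_left _ _)
          have h2 : |u t j| ≤ 1 := hub t j
          nlinarith [abs_nonneg (A t i j), abs_nonneg (u t j)]
      _ = k * max C 0 := by simp [Finset.sum_const, mul_comm]

/-- Any admissible controlled input of the malfunctioning nonlinear system
`ẋ = f(x) + g_c(x)u_c + g_uc(x)u_uc` achieving `x(t_f) = x_tg` has energy at least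
`(1/t_f)‖B_c†(v − x̃ − t_f B_uc ū_uc)‖₂²` (the approximation used for the
malfunctioning energy). -/
theorem malfunctioning_energy_lower_bound_nonlinear {n m p : ℕ} (tf : ℝ) (htf : 0 < tf)
    (f : (Fin n → ℝ) → Fin n → ℝ)
    (gc : (Fin n → ℝ) → Matrix (Fin n) (Fin m) ℝ)
    (guc : (Fin n → ℝ) → Matrix (Fin n) (Fin p) ℝ)
    (hf : ∃ Lf : ℝ, ∀ x1 x2 : Fin n → ℝ, normInf (f x1 - f x2) ≤ Lf * normInf (x1 - x2))
    (hgc : ∃ Lc : ℝ, ∀ x1 x2 : Fin n → ℝ, matNormInf (gc x1 - gc x2) ≤ Lc * normInf (x1 - x2))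
    (hguc : ∃ Lu : ℝ, ∀ x1 x2 : Fin n → ℝ, matNormInf (guc x1 - guc x2) ≤ Lu * normInf (x1 - x2))
    (uc : ℝ → Fin m → ℝ) (huc : Measurable uc) (hucb : ∀ t, normInf (uc t) ≤ 1)
    (uuc : ℝ → Fin p → ℝ) (huuc : Measurable uuc) (huucb : ∀ t, normInf (uuc t) ≤ 1)
    (x : ℝ → Fin n → ℝ) (x0 xtg : Fin n → ℝ) (hx0 : x 0 = x0)
    (hx : ∀ t ∈ Set.Icc (0 : ℝ) tf,
      HasDerivAt x (f (x t) + gc (x t) *ᵥ uc t + guc (x t) *ᵥ uuc t) t)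
    (hBc : IsUnit ((gc x0) * (gc x0)ᵀ).det)
    (ubaruc : Fin p → ℝ) (hubaruc : ubaruc = (1 / tf) • ∫ t in (0:ℝ)..tf, uuc t)
    (v : Fin n → ℝ)
    (hv : v = -(∫ t in (0:ℝ)..tf, f (x t)) -
      ∫ t in (0:ℝ)..tf, ((gc (x t) - gc x0) *ᵥ uc t + (guc (x t) - guc x0) *ᵥ uuc t))
    (hreach : x tf = xtg) :
    (∫ t in (0:ℝ)..tf, ∑ i, (uc t i) ^ 2) ≥
      (1 / tf) * ∑ i, ((pinv (gc x0) *ᵥ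
        (v - (x0 - xtg) - tf • (guc x0 *ᵥ ubaruc))) i) ^ 2 := by
  obtain ⟨Lf, hf⟩ := hf
  obtain ⟨Lc, hgc'⟩ := hgc
  obtain ⟨Lu, hguc'⟩ := hguc
  have hts : (0:ℝ) ≤ tf := htf.le
  have hIcc : Set.uIcc (0:ℝ) tf = Set.Icc 0 tf := Set.uIcc_of_le hts
  have hucb' : ∀ t i, |uc t i| ≤ 1 := fun t i => (abs_le_normInf _ i).trans (hucb t)
  have huucb' : ∀ t i, |uuc t i| ≤ 1 := fun t i => (abs_le_normInf _ i).trans (huucb t)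
  -- continuity of x on [0, tf]
  have hxc : ContinuousOn x (Set.Icc 0 tf) := fun t ht =>
    ((hx t ht).continuousAt).continuousWithinAt
  -- continuity of f
  have hfc : Continuous f := by
    have : LipschitzWith ⟨|Lf|, abs_nonneg _⟩ f := by
      refine LipschitzWith.of_dist_le_mul fun x1 x2 => ?_
      rw [dist_eq_norm, dist_eq_norm]
      refine (pi_norm_le_iff_of_nonneg (mul_nonneg (by exact abs_nonneg Lf) (norm_nonneg _))).2 fun i => ?_
      have h1 := hf x1 x2
      have h2 := abs_le_normInf (f x1 - f x2) i
      have h3 := normInf_le_norm (x1 - x2)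
      have h4 := normInf_nonneg (x1 - x2)
      have h5 : (f x1 - f x2) i = f x1 i - f x2 i := rfl
      rw [h5] at h2
      rw [Real.norm_eq_abs]
      show |f x1 i - f x2 i| ≤ |Lf| * ‖x1 - x2‖
      nlinarith [le_abs_self Lf, abs_nonneg Lf, norm_nonneg (x1 - x2)]
    exact this.continuous
  -- entrywise continuity for gc и guc
  have hgce : ∀ (i : Fin n) (j : Fin m), Continuous fun y => gc y i j := by
    intro i j
    have : LipschitzWith ⟨|Lc|, abs_nonneg _⟩ (fun y => gc y i j) := by
      refine LipschitzWith.of_dist_le_mul fun x1 x2 => ?_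
      rw [Real.dist_eq, dist_eq_norm]
      have h1 := hgc' x1 x2
      have h2 := abs_le_matNormInf (gc x1 - gc x2) i j
      have h3 := normInf_le_norm (x1 - x2)
      have h4 := normInf_nonneg (x1 - x2)
      have h5 : (gc x1 - gc x2) i j = gc x1 i j - gc x2 i j := rfl
      rw [h5] at h2
      show |gc x1 i j - gc x2 i j| ≤ |Lc| * ‖x1 - x2‖
      nlinarith [le_abs_self Lc, abs_nonneg Lc, norm_nonneg (x1 - x2)]
    exact this.continuous
  have hguce : ∀ (i : Fin n) (j : Fin p), Continuous fun y => guc y i j := by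
    intro i j
    have : LipschitzWith ⟨|Lu|, abs_nonneg _⟩ (fun y => guc y i j) := by
      refine LipschitzWith.of_dist_le_mul fun x1 x2 => ?_
      rw [Real.dist_eq, dist_eq_norm]
      have h1 := hguc' x1 x2
      have h2 := abs_le_matNormInf (guc x1 - guc x2) i j
      have h3 := normInf_le_norm (x1 - x2)
      have h4 := normInf_nonneg (x1 - x2)
      have h5 : (guc x1 - guc x2) i j = guc x1 i j - guc x2 i j := rfl
      rw [h5] at h2
      show |guc x1 i j - guc x2 i j| ≤ |Lu| * ‖x1 - x2‖
      nlinarith [le_abs_self Lu, abs_nonneg Lu, norm_nonneg (x1 - x2)]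
    exact this.continuous
  -- bound on x on [0, tf]
  obtain ⟨M, hM⟩ := isCompact_Icc.exists_bound_of_continuousOn hxc
  have hM0 : 0 ≤ M := le_trans (norm_nonneg _) (hM 0 ⟨le_refl _, hts⟩)
  -- entry bounds
  set Sc : ℝ := ∑ i, ∑ j, |gc x0 i j| with hSc
  have hSc0 : 0 ≤ Sc := Finset.sum_nonneg fun i _ => Finset.sum_nonneg fun j _ => abs_nonneg _
  have hScb : ∀ i j, |gc x0 i j| ≤ Sc := fun i j => by
    refine le_trans ?_ (Finset.single_le_sum (f := fun i => ∑ j, |gc x0 i j|)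
      (fun _ _ => Finset.sum_nonneg fun _ _ => abs_nonneg _) (Finset.mem_univ i))
    exact Finset.single_le_sum (f := fun j => |gc x0 i j|) (fun _ _ => abs_nonneg _)
      (Finset.mem_univ j)
  set Su : ℝ := ∑ i, ∑ j, |guc x0 i j| with hSu
  have hSu0 : 0 ≤ Su := Finset.sum_nonneg fun i _ => Finset.sum_nonneg fun j _ => abs_nonneg _
  have hSub : ∀ i j, |guc x0 i j| ≤ Su := fun i j => by
    refine le_trans ?_ (Finset.single_le_sum (f := fun i => ∑ j, |guc x0 i j|)
      (fun _ _ => Finset.sum_nonneg fun _ _ => abs_nonneg _) (Finset.mem_univ i))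
    exact Finset.single_le_sum (f := fun j => |guc x0 i j|) (fun _ _ => abs_nonneg _)
      (Finset.mem_univ j)
  set Cc : ℝ := |Lc| * (M + ‖x0‖) + Sc with hCc
  have hCcb : ∀ t ∈ Set.Icc (0:ℝ) tf, ∀ i j, |gc (x t) i j| ≤ Cc := by
    intro t ht i j
    have h1 := hgc' (x t) x0
    have h2 := abs_le_matNormInf (gc (x t) - gc x0) i j
    have h3 := normInf_le_norm (x t - x0)
    have h4 := normInf_nonneg (x t - x0)
    have h5 : (gc (x t) - gc x0) i j = gc (x t) i j - gc x0 i j := rfl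
    rw [h5] at h2
    have h6 : ‖x t - x0‖ ≤ M + ‖x0‖ := by
      calc ‖x t - x0‖ ≤ ‖x t‖ + ‖x0‖ := norm_sub_le _ _
        _ ≤ M + ‖x0‖ := by linarith [hM t ht]
    have h7 := hScb i j
    have := abs_sub_abs_le_abs_sub (gc (x t) i j) (gc x0 i j)
    nlinarith [le_abs_self Lc, abs_nonneg Lc, norm_nonneg (x t - x0), norm_nonneg x0]
  set Cu : ℝ := |Lu| * (M + ‖x0‖) + Su with hCu
  have hCub : ∀ t ∈ Set.Icc (0:ℝ) tf, ∀ i j, |guc (x t) i j| ≤ Cu := by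
    intro t ht i j
    have h1 := hguc' (x t) x0
    have h2 := abs_le_matNormInf (guc (x t) - guc x0) i j
    have h3 := normInf_le_norm (x t - x0)
    have h4 := normInf_nonneg (x t - x0)
    have h5 : (guc (x t) - guc x0) i j = guc (x t) i j - guc x0 i j := rfl
    rw [h5] at h2
    have h6 : ‖x t - x0‖ ≤ M + ‖x0‖ := by
      calc ‖x t - x0‖ ≤ ‖x t‖ + ‖x0‖ := norm_sub_le _ _
        _ ≤ M + ‖x0‖ := by linarith [hM t ht]
    have h7 := hSub i j
    have := abs_sub_abs_le_abs_sub (guc (x t) i j) (guc x0 i j)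
    nlinarith [le_abs_self Lu, abs_nonneg Lu, norm_nonneg (x t - x0), norm_nonneg x0]
  -- a.e. measurability of matrix entries along x
  have hrestr : volume.restrict (Set.Ioc (0:ℝ) tf) ≤ volume.restrict (Set.Icc 0 tf) :=
    Measure.restrict_mono Set.Ioc_subset_Icc_self le_rfl
  have hgcm : ∀ (i : Fin n) (j : Fin m),
      AEMeasurable (fun t => gc (x t) i j) (volume.restrict (Set.Ioc 0 tf)) := fun i j =>
    (((hgce i j).comp_continuousOn hxc).aemeasurable measurableSet_Icc).mono_measure hrestr
  have hgucm : ∀ (i : Fin n) (j : Fin p),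
      AEMeasurable (fun t => guc (x t) i j) (volume.restrict (Set.Ioc 0 tf)) := fun i j =>
    (((hguce i j).comp_continuousOn hxc).aemeasurable measurableSet_Icc).mono_measure hrestr
  -- interval integrability of all pieces
  have I1 : IntervalIntegrable (fun t => f (x t)) volume 0 tf := by
    apply ContinuousOn.intervalIntegrable
    rw [hIcc]
    exact hfc.comp_continuousOn hxc
  have I2 : IntervalIntegrable (fun t => gc (x t) *ᵥ uc t) volume 0 tf :=
    matvec_intervalIntegrable tf hts _ hgcm Cc hCcb uc huc hucb'
  have I3 : IntervalIntegrable (fun t => guc (x t) *ᵥ uuc t) volume 0 tf :=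
    matvec_intervalIntegrable tf hts _ hgucm Cu hCub uuc huuc huucb'
  have I4 : IntervalIntegrable (fun t => gc x0 *ᵥ uc t) volume 0 tf :=
    matvec_intervalIntegrable tf hts (fun _ => gc x0) (fun i j => aemeasurable_const)
      Sc (fun t _ i j => hScb i j) uc huc hucb'
  have I5 : IntervalIntegrable (fun t => guc x0 *ᵥ uuc t) volume 0 tf :=
    matvec_intervalIntegrable tf hts (fun _ => guc x0) (fun i j => aemeasurable_const)
      Su (fun t _ i j => hSub i j) uuc huuc huucb'
  have I6 : IntervalIntegrable uc volume 0 tf :=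
    vec_intervalIntegrable tf hts uc
      (fun i => ((measurable_pi_apply i).comp huc).aemeasurable) 1 (fun t _ i => hucb' t i)
  have I7 : IntervalIntegrable uuc volume 0 tf :=
    vec_intervalIntegrable tf hts uuc
      (fun i => ((measurable_pi_apply i).comp huuc).aemeasurable) 1 (fun t _ i => huucb' t i)
  have I8 : ∀ i : Fin m, IntervalIntegrable (fun t => uc t i) volume 0 tf := fun i =>
    sc_intervalIntegrable tf 1 hts _ ((measurable_pi_apply i).comp huc).aemeasurable.restrict
      (fun t => hucb' t i)
  have I9 : ∀ i : Fin m, IntervalIntegrable (fun t => (uc t i) ^ 2) volume 0 tf := fun i =>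
    sc_intervalIntegrable tf 1 hts _
      (((measurable_pi_apply i).comp huc).pow_const 2).aemeasurable.restrict
      (fun t => by rw [abs_pow]; exact pow_le_one₀ (abs_nonneg _) (hucb' t i))
  -- FTC
  have hFTC : (∫ t in (0:ℝ)..tf, f (x t)) + (∫ t in (0:ℝ)..tf, gc (x t) *ᵥ uc t)
      + (∫ t in (0:ℝ)..tf, guc (x t) *ᵥ uuc t) = xtg - x0 := by
    have h := intervalIntegral.integral_eq_sub_of_hasDerivAt
      (f' := fun t => f (x t) + gc (x t) *ᵥ uc t + guc (x t) *ᵥ uuc t)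
      (fun t ht => hx t (by rwa [hIcc] at ht)) ((I1.add I2).add I3)
    rw [intervalIntegral.integral_add (I1.add I2) I3,
      intervalIntegral.integral_add I1 I2, hx0, hreach] at h
    exact h
  -- splitting v
  have hv' : v = -(∫ t in (0:ℝ)..tf, f (x t))
      - (((∫ t in (0:ℝ)..tf, gc (x t) *ᵥ uc t) - ∫ t in (0:ℝ)..tf, gc x0 *ᵥ uc t)
        + ((∫ t in (0:ℝ)..tf, guc (x t) *ᵥ uuc t) - ∫ t in (0:ℝ)..tf, guc x0 *ᵥ uuc t)) := by
    rw [hv]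
    congr 1
    rw [intervalIntegral.integral_congr (g := fun t =>
        (gc (x t) *ᵥ uc t - gc x0 *ᵥ uc t) + (guc (x t) *ᵥ uuc t - guc x0 *ᵥ uuc t))
      (fun t _ => by rw [Matrix.sub_mulVec, Matrix.sub_mulVec]),
      intervalIntegral.integral_add (I2.sub I4) (I3.sub I5),
      intervalIntegral.integral_sub I2 I4, intervalIntegral.integral_sub I3 I5]
  -- pulling constant matrices out of integrals
  have hpull : ∀ {k : ℕ} (B : Matrix (Fin n) (Fin k) ℝ) (u : ℝ → Fin k → ℝ),
      IntervalIntegrable u volume 0 tf →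
      (∫ t in (0:ℝ)..tf, B *ᵥ u t) = B *ᵥ (∫ t in (0:ℝ)..tf, u t) := by
    intro k B u hu
    have := ContinuousLinearMap.intervalIntegral_comp_comm
      (LinearMap.toContinuousLinearMap (Matrix.mulVecLin B)) hu
    simpa [Matrix.mulVecLin_apply] using this
  -- the key identity
  have hW2 : tf • (guc x0 *ᵥ ubaruc) = ∫ t in (0:ℝ)..tf, guc x0 *ᵥ uuc t := by
    rw [hubaruc, Matrix.mulVec_smul, smul_smul, mul_one_div, div_self htf.ne', one_smul,
      hpull (guc x0) uuc I7]
  have hWkey : v - (x0 - xtg) - tf • (guc x0 *ᵥ ubaruc)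
      = gc x0 *ᵥ (∫ t in (0:ℝ)..tf, uc t) := by
    rw [hv', hW2, ← hpull (gc x0) uc I6]
    have h := hFTC
    abel_nf
    abel_nf at h
    linear_combination (norm := abel) -h
  -- component formula for the integral of uc
  have hcomp : ∀ i : Fin m, (∫ t in (0:ℝ)..tf, uc t) i = ∫ t in (0:ℝ)..tf, uc t i := by
    intro i
    have := ContinuousLinearMap.intervalIntegral_comp_comm
      (ContinuousLinearMap.proj (R := ℝ) (φ := fun _ : Fin m => ℝ) i) I6
    simpa using this.symm
  -- main chain
  set U : Fin m → ℝ := ∫ t in (0:ℝ)..tf, uc t with hU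
  have hstep1 : ∑ i, ((pinv (gc x0) *ᵥ (v - (x0 - xtg) - tf • (guc x0 *ᵥ ubaruc))) i) ^ 2
      ≤ ∑ i, (U i) ^ 2 := by
    rw [hWkey, Matrix.mulVec_mulVec]
    exact proj_sq_le (gc x0) hBc U
  have hstep2 : ∑ i, (U i) ^ 2 ≤ tf * ∫ t in (0:ℝ)..tf, ∑ i, (uc t i) ^ 2 := by
    calc ∑ i, (U i) ^ 2 = ∑ i, (∫ t in (0:ℝ)..tf, uc t i) ^ 2 := by
          exact Finset.sum_congr rfl fun i _ => by rw [hcomp i]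
      _ ≤ ∑ i, tf * ∫ t in (0:ℝ)..tf, (uc t i) ^ 2 :=
          Finset.sum_le_sum fun i _ => sq_integral_le tf htf _ (I8 i) (I9 i)
      _ = tf * ∑ i, ∫ t in (0:ℝ)..tf, (uc t i) ^ 2 := by rw [Finset.mul_sum]
      _ = tf * ∫ t in (0:ℝ)..tf, ∑ i, (uc t i) ^ 2 := by
          rw [intervalIntegral.integral_finset_sum (fun i _ => I9 i)]
  rw [ge_iff_le]
  calc (1 / tf) * ∑ i, ((pinv (gc x0) *ᵥ (v - (x0 - xtg) - tf • (guc x0 *ᵥ ubaruc))) i) ^ 2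
      ≤ (1 / tf) * (tf * ∫ t in (0:ℝ)..tf, ∑ i, (uc t i) ^ 2) := by
        apply mul_le_mul_of_nonneg_left (hstep1.trans hstep2) (by positivity)
    _ = ∫ t in (0:ℝ)..tf, ∑ i, (uc t i) ^ 2 := by
        field_simp
end
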